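/- Let T > 0, R ≥ 1, Λ ∈ ℝ^{R×R}, b ∈ ℝ^R, and define the kernel k(t,s) := 𝟙^⊤ exp(−(t−s)Λ) b for 0 ≤ s ≤ t ≤ T. Then: (a) for all 0 ≤ s ≤ t ≤ τ ≤ T and every n ≥ 1: κ̇^{n,τ}_{s,t} = 𝟙^⊤ φ_{n−1}(t−s) E(τ−t) b and κ^{n,τ}_{s,t} = 𝟙^⊤ ψ_n(t−s) E(τ−t) b; (b) for every partition 0 ≤ t_0 < t_1 < ⋯ < t_J ≤ T, all integers n_1,…,n_k ≥ 1 and all indices 0 < i_1 < ⋯ < i_{k+1} ≤ J: μ^{n_1,…,n_k}_{i_1,…,i_{k+1}} = 𝟙^⊤ ψ_{n_1}(δ_{i_1}) (∏_{l=2}^k E(Δ_{i_{l−1},i_l}) φ_{n_l}(δ_{i_l})) E(t_{i_{k+1}} − t_{i_k}) b, where δ_i := t_i − t_{i−1}, Δ_{i,j} := t_{j−1} − t_i, and the product over l is the ordered matrix product (taken as the identity when k = 1). -/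

import Mathlib

open MeasureTheory Matrix

noncomputable section

/-- The simplex `Δ^n_{s,t}` of nondecreasing `n`-tuples with values in `[s,t]`. -/
def volSimplex (n : ℕ) (s t : ℝ) : Set (Fin n → ℝ) :=
  {r | (∀ i, r i ∈ Set.Icc s t) ∧ ∀ i j : Fin n, i ≤ j → r i ≤ r j}

/-- `r_{l+1}`, with the convention that `r_{n+1} = τ`. -/
def nxt {n : ℕ} (r : Fin n → ℝ) (τ : ℝ) (l : Fin n) : ℝ :=
  if h : (l : ℕ) + 1 < n then r ⟨(l : ℕ) + 1, h⟩ else τ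

/-- The chain `s = r̃_0, r̃_1 = r_1, …, r̃_n = r_n, r̃_{n+1} = τ`. -/
def chain {n : ℕ} (s τ : ℝ) (r : Fin n → ℝ) : Fin (n + 2) → ℝ := fun i =>
  if h0 : (i : ℕ) = 0 then s
  else if h : (i : ℕ) ≤ n then r ⟨(i : ℕ) - 1, by omega⟩ else τ

/-- `κ^{n,τ}_{s,t}` for the scalar kernel `k`. -/
def kap (k : ℝ → ℝ → ℝ) (n : ℕ) (s t τ : ℝ) : ℝ :=
  ∫ r in volSimplex n s t, ∏ l : Fin n, k (nxt r τ l) (r l)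

/-- `κ̇^{n+1,τ}_{s,t}` for the scalar kernel `k` (superscript `n + 1`). -/
def kapDot (k : ℝ → ℝ → ℝ) (n : ℕ) (s t τ : ℝ) : ℝ :=
  ∫ r in volSimplex n s t,
    ∏ l : Fin (n + 1), k (chain s τ r l.succ) (chain s τ r l.castSucc)

/-- The box `[t_{i₁-1},t_{i₁}] × ⋯ × [t_{i_k-1},t_{i_k}]`. -/
def blockBox (t : ℕ → ℝ) {k : ℕ} (i : Fin k → ℕ) : Set (Fin k → ℝ) :=
  Set.univ.pi fun l => Set.Icc (t (i l - 1)) (t (i l))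

/-- The scalar block weight `μ^{n₁+1,…,n_k+1}_{i₁,…,i_k}` with final time `τ`
(each superscript is `nn l + 1`). -/
def muW (ker : ℝ → ℝ → ℝ) (t : ℕ → ℝ) {k : ℕ} (i : Fin k → ℕ)
    (nn : Fin k → ℕ) (τ : ℝ) : ℝ :=
  ∫ r in blockBox t i, ∏ l, kapDot ker (nn l) (r l) (t (i l)) (nxt r τ l)

/-- `E(δ) = exp(-δΛ)` (matrix exponential). -/
def Eexp {R : ℕ} (Λ : Matrix (Fin R) (Fin R) ℝ) (δ : ℝ) : Matrix (Fin R) (Fin R) ℝ :=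
  NormedSpace.exp ((-δ) • Λ)

/-- The rank-one matrix `C = v 𝟙ᵀ`. -/
def Cmat {R : ℕ} (v : Fin R → ℝ) : Matrix (Fin R) (Fin R) ℝ :=
  Matrix.vecMulVec v (fun _ => (1 : ℝ))

/-- `r_{l-1}`, with the convention `r_0 = 0`. -/
def prevR {n : ℕ} (r : Fin n → ℝ) (l : Fin n) : ℝ :=
  if h : 0 < (l : ℕ) then r ⟨(l : ℕ) - 1, by omega⟩ else 0

/-- `r_n`, with the convention that this is `0` when `n = 0`. -/
def lastR {n : ℕ} (r : Fin n → ℝ) : ℝ :=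
  if h : 0 < n then r ⟨n - 1, by omega⟩ else 0

/-- `Φ^w(δ) = ∫_{Δ^n_{0,δ}} E(r₁) C_{p₁} E(r₂-r₁) ⋯ C_{p_n} E(δ-r_n) dr` (entrywise
Lebesgue integrals of the ordered matrix product); `Φ^∅(δ) = E(δ)`. -/
def PhiW {R q : ℕ} (Λ : Matrix (Fin R) (Fin R) ℝ) (b : Fin q → Fin R → ℝ)
    {n : ℕ} (p : Fin n → Fin q) (δ : ℝ) : Matrix (Fin R) (Fin R) ℝ :=
  Matrix.of fun i j =>
    ∫ r in volSimplex n 0 δ,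
      ((List.ofFn fun l : Fin n =>
          Eexp Λ (r l - prevR r l) * Cmat (b (p l))).prod * Eexp Λ (δ - lastR r)) i j

/-- `Ψ^w(δ) = ∫_0^δ Φ^w(u) du` (entrywise). -/
def PsiW {R q : ℕ} (Λ : Matrix (Fin R) (Fin R) ℝ) (b : Fin q → Fin R → ℝ)
    {n : ℕ} (p : Fin n → Fin q) (δ : ℝ) : Matrix (Fin R) (Fin R) ℝ :=
  Matrix.of fun i j => ∫ u in (0:ℝ)..δ, PhiW Λ b p u i j

/-- The finite state space kernels `k_p(t,s) = 𝟙ᵀ exp(-(t-s)Λ) b_p`. -/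
def fsskKer {R q : ℕ} (Λ : Matrix (Fin R) (Fin R) ℝ) (b : Fin q → Fin R → ℝ) :
    Fin q → ℝ → ℝ → ℝ := fun p a c =>
  (fun _ : Fin R => (1 : ℝ)) ⬝ᵥ (Eexp Λ (a - c)).mulVec (b p)

/-- `φ_n(δ)`: `φ_0 = E`, `φ_{n+1}(δ) = ∫_0^δ E(δ-u) C φ_n(u) du` (entrywise). -/
def phiN {R : ℕ} (Λ : Matrix (Fin R) (Fin R) ℝ) (b : Fin R → ℝ) :
    ℕ → ℝ → Matrix (Fin R) (Fin R) ℝ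
  | 0, δ => Eexp Λ δ
  | n + 1, δ =>
    Matrix.of fun i j => ∫ u in (0:ℝ)..δ, (Eexp Λ (δ - u) * Cmat b * phiN Λ b n u) i j

/-- `ψ_{n+1}(δ) = ∫_0^δ φ_n(u) du` (entrywise); i.e. `psiN n = ψ_{n+1}`. -/
def psiN {R : ℕ} (Λ : Matrix (Fin R) (Fin R) ℝ) (b : Fin R → ℝ) (n : ℕ) (δ : ℝ) :
    Matrix (Fin R) (Fin R) ℝ :=
  Matrix.of fun i j => ∫ u in (0:ℝ)..δ, phiN Λ b n u i j



variable {R : ℕ} (Λ : Matrix (Fin R) (Fin R) ℝ) (b : Fin R → ℝ)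

lemma Eexp_add (x y : ℝ) : Eexp Λ x * Eexp Λ y = Eexp Λ (x + y) := by
  unfold Eexp
  have hc : Commute ((-x) • Λ) ((-y) • Λ) :=
    ((Commute.refl Λ).smul_left (-x)).smul_right (-y)
  rw [show ((-(x + y)) • Λ) = (-x) • Λ + (-y) • Λ by module,
  ]
  exact (Matrix.exp_add_of_commute (-x • Λ) (-y • Λ) hc).symm

lemma continuous_Eexp_entry (i j : Fin R) : Continuous fun x : ℝ => Eexp Λ x i j := by
  letI : NormedRing (Matrix (Fin R) (Fin R) ℝ) := Matrix.linftyOpNormedRing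
  letI : NormedAlgebra ℝ (Matrix (Fin R) (Fin R) ℝ) := Matrix.linftyOpNormedAlgebra
  letI : NormedAlgebra ℚ (Matrix (Fin R) (Fin R) ℝ) := Matrix.linftyOpNormedAlgebra
  letI : CompleteSpace (Matrix (Fin R) (Fin R) ℝ) := FiniteDimensional.complete ℝ _
  have h1 : Continuous fun x : ℝ => NormedSpace.exp ((-x) • Λ) :=
    NormedSpace.exp_continuous.comp ((continuous_neg.comp continuous_id).smul continuous_const)
  have h2 : Continuous fun A : Matrix (Fin R) (Fin R) ℝ => A i j :=
    LinearMap.continuous_of_finiteDimensional (Matrix.entryLinearMap ℝ ℝ i j)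
  exact h2.comp h1

lemma continuous_Eexp : Continuous fun x : ℝ => Eexp Λ x :=
  continuous_pi fun i => continuous_pi fun j => continuous_Eexp_entry Λ i j

/-- `𝟙ᵀ M b` as a scalar. -/
def oneB (b : Fin R → ℝ) (M : Matrix (Fin R) (Fin R) ℝ) : ℝ :=
  (fun _ : Fin R => (1 : ℝ)) ⬝ᵥ M.mulVec b

lemma oneB_eq (M : Matrix (Fin R) (Fin R) ℝ) :
    oneB b M = ∑ i, ∑ j, M i j * b j := by
  simp [oneB, dotProduct, Matrix.mulVec]

lemma Cmat_mulVec (w : Fin R → ℝ) :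
    (Cmat b).mulVec w = ((fun _ : Fin R => (1 : ℝ)) ⬝ᵥ w) • b := by
  funext i
  simp [Cmat, Matrix.mulVec, dotProduct, Matrix.vecMulVec_apply, Finset.sum_mul,
    Finset.mul_sum, mul_comm]

lemma oneB_mul (M N : Matrix (Fin R) (Fin R) ℝ) :
    oneB b M * oneB b N = oneB b (M * Cmat b * N) := by
  simp only [oneB, ← Matrix.mulVec_mulVec]
  rw [Cmat_mulVec]
  simp [Matrix.mulVec_smul, dotProduct_smul, smul_eq_mul, mul_comm]

lemma continuous_phiN (n : ℕ) : Continuous fun δ : ℝ => phiN Λ b n δ := by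
  induction n with
  | zero => exact continuous_Eexp Λ
  | succ n ih =>
    have hM : Continuous fun p : ℝ × ℝ =>
        Eexp Λ (p.1 - p.2) * Cmat b * phiN Λ b n p.2 :=
      (((continuous_Eexp Λ).comp (continuous_fst.sub continuous_snd)).matrix_mul
        continuous_const).matrix_mul (ih.comp continuous_snd)
    refine continuous_pi fun i => continuous_pi fun j => ?_
    simp only [phiN, Matrix.of_apply]
    have hf : Continuous (Function.uncurry fun δ u =>
        (Eexp Λ (δ - u) * Cmat b * phiN Λ b n u) i j) :=
      (continuous_apply j).comp ((continuous_apply i).comp hM)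
    exact intervalIntegral.continuous_parametric_intervalIntegral_of_continuous hf continuous_id

lemma intervalIntegral_oneB {p q : ℝ} {M : ℝ → Matrix (Fin R) (Fin R) ℝ}
    (hM : ∀ i j, Continuous fun x => M x i j) :
    ∫ x in p..q, oneB b (M x) = oneB b (Matrix.of fun i j => ∫ x in p..q, M x i j) := by
  simp only [oneB_eq, Matrix.of_apply]
  rw [intervalIntegral.integral_finset_sum (f := fun i x => ∑ j, M x i j * b j) (fun i _ =>
    (continuous_finset_sum _ fun j _ => (hM i j).mul continuous_const).intervalIntegrable _ _)]
  refine Finset.sum_congr rfl fun i _ => ?_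
  rw [intervalIntegral.integral_finset_sum (f := fun j x => M x i j * b j) (fun j _ =>
    ((hM i j).mul continuous_const).intervalIntegrable _ _)]
  exact Finset.sum_congr rfl fun j _ => intervalIntegral.integral_mul_const _ _

lemma of_intervalIntegral_mul (A B : Matrix (Fin R) (Fin R) ℝ) {p q : ℝ}
    {M : ℝ → Matrix (Fin R) (Fin R) ℝ} (hM : ∀ i j, Continuous fun x => M x i j) :
    (Matrix.of fun i j => ∫ x in p..q, (A * M x * B) i j)
      = A * (Matrix.of fun i j => ∫ x in p..q, M x i j) * B := by
  apply Matrix.ext; intro i j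
  simp only [Matrix.mul_apply, Matrix.of_apply]
  rw [intervalIntegral.integral_finset_sum (f := fun l x => (∑ m, A i m * M x m l) * B l j) (fun l _ =>
    ((continuous_finset_sum _ fun m _ => continuous_const.mul (hM m l)).mul
      continuous_const).intervalIntegrable _ _)]
  refine Finset.sum_congr rfl fun l _ => ?_
  rw [intervalIntegral.integral_mul_const,
    intervalIntegral.integral_finset_sum (f := fun m x => A i m * M x m l) (fun m _ =>
      (continuous_const.mul (hM m l)).intervalIntegrable _ _)]
  congr 1
  exact Finset.sum_congr rfl fun m _ => intervalIntegral.integral_const_mul _ _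

lemma phiN_rec {p q : ℝ} (n : ℕ) :
    (Matrix.of fun i j => ∫ x in p..q,
        (Eexp Λ (x - p) * Cmat b * phiN Λ b n (q - x)) i j)
      = phiN Λ b (n + 1) (q - p) := by
  apply Matrix.ext; intro i j
  simp only [Matrix.of_apply, phiN]
  have h : ∀ x : ℝ, (Eexp Λ (x - p) * Cmat b * phiN Λ b n (q - x)) i j
      = (fun u => (Eexp Λ ((q - p) - u) * Cmat b * phiN Λ b n u) i j) (q - x) := by
    intro x
    have e1 : x - p = (q - p) - (q - x) := by ring
    simp only [e1]
  rw [intervalIntegral.integral_congr (g := fun x =>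
      (fun u => (Eexp Λ ((q - p) - u) * Cmat b * phiN Λ b n u) i j) (q - x))
      (fun x _ => h x),
    intervalIntegral.integral_comp_sub_left
      (fun u => (Eexp Λ ((q - p) - u) * Cmat b * phiN Λ b n u) i j) q,
    sub_self]

lemma psiN_rec {p q : ℝ} (n : ℕ) :
    (Matrix.of fun i j => ∫ x in p..q, phiN Λ b n (q - x) i j)
      = psiN Λ b n (q - p) := by
  apply Matrix.ext; intro i j
  simp only [Matrix.of_apply, psiN]
  rw [intervalIntegral.integral_comp_sub_left (fun u => phiN Λ b n u i j) q, sub_self]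

lemma volSimplex_isClosed (n : ℕ) (s t : ℝ) : IsClosed (volSimplex n s t) := by
  have h : volSimplex n s t =
      (⋂ i, (fun r : Fin n → ℝ => r i) ⁻¹' Set.Icc s t) ∩
        ⋂ (i) (j) (_ : i ≤ j), {r : Fin n → ℝ | r i ≤ r j} := by
    ext r
    simp [volSimplex, Set.mem_iInter]
  rw [h]
  refine IsClosed.inter (isClosed_iInter fun i => isClosed_Icc.preimage (continuous_apply i))
    (isClosed_iInter fun i => isClosed_iInter fun j => isClosed_iInter fun _ =>
      isClosed_le (continuous_apply i) (continuous_apply j))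

lemma volSimplex_isCompact (n : ℕ) (s t : ℝ) : IsCompact (volSimplex n s t) := by
  refine (isCompact_univ_pi fun _ : Fin n => isCompact_Icc (a := s) (b := t)).of_isClosed_subset
    (volSimplex_isClosed n s t) fun r hr => ?_
  simp only [Set.mem_univ_pi]
  exact hr.1

lemma cons_mem_volSimplex_iff {n : ℕ} {s t x : ℝ} {r' : Fin n → ℝ} :
    Fin.cons x r' ∈ volSimplex (n + 1) s t ↔ x ∈ Set.Icc s t ∧ r' ∈ volSimplex n x t := by
  constructor
  · rintro ⟨h1, h2⟩
    refine ⟨by simpa using h1 0, fun i => ⟨?_, by simpa using (h1 i.succ).2⟩,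
      fun i j hij => ?_⟩
    · have := h2 0 i.succ (Fin.zero_le _)
      simpa using this
    · have := h2 i.succ j.succ (Fin.succ_le_succ_iff.mpr hij)
      simpa using this
  · rintro ⟨hx, h1, h2⟩
    constructor
    · intro i
      induction i using Fin.cases with
      | zero => simpa using hx
      | succ i => exact ⟨le_trans hx.1 (h1 i).1, (h1 i).2⟩
    · intro i j
      induction i using Fin.cases with
      | zero =>
        induction j using Fin.cases with
        | zero => intro _; exact le_rfl
        | succ j => intro _; simpa using (h1 j).1
      | succ i =>
        induction j using Fin.cases with
        | zero => intro h; exact absurd h (by simp [Fin.le_def])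
        | succ j =>
          intro h
          simpa using h2 i j (Fin.succ_le_succ_iff.mp h)

lemma integral_pi0 (f : (Fin 0 → ℝ) → ℝ) : ∫ r, f r = f default := by
  rw [MeasureTheory.integral_unique]
  have h1 : (volume : Measure (Fin 0 → ℝ)) Set.univ = 1 := by
    rw [MeasureTheory.volume_pi, MeasureTheory.Measure.pi_univ]
    simp
  rw [measureReal_def, h1]
  simp only [ENNReal.toReal_one, one_smul]
  exact congrArg f (Subsingleton.elim _ _)

lemma simplex_split {n : ℕ} {s t : ℝ} (hst : s ≤ t) {F : (Fin (n + 1) → ℝ) → ℝ}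
    (hF : Continuous F) :
    ∫ r in volSimplex (n + 1) s t, F r
      = ∫ x in s..t, ∫ r' in volSimplex n x t, F (Fin.cons x r') := by
  have hmeas := (volSimplex_isClosed (n + 1) s t).measurableSet
  have hcpt := volSimplex_isCompact (n + 1) s t
  have hIntOn : IntegrableOn F (volSimplex (n + 1) s t) :=
    hF.continuousOn.integrableOn_compact hcpt
  rw [← MeasureTheory.integral_indicator hmeas]
  have hmp := (MeasureTheory.volume_preserving_piFinSuccAbove (fun _ : Fin (n + 1) => ℝ) 0).symm
  rw [← hmp.integral_comp (MeasurableEquiv.measurableEmbedding _) _]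
  have hsymm : ∀ p : ℝ × (Fin n → ℝ),
      (MeasurableEquiv.piFinSuccAbove (fun _ : Fin (n + 1) => ℝ) 0).symm p
        = Fin.cons p.1 p.2 := by
    intro p
    simp [MeasurableEquiv.piFinSuccAbove_symm_apply, Fin.insertNthEquiv,
      Fin.insertNth_zero']
  simp only [hsymm]
  have hInt2 : Integrable
      (fun p : ℝ × (Fin n → ℝ) =>
        Set.indicator (volSimplex (n + 1) s t) F (Fin.cons p.1 p.2))
      ((volume : Measure ℝ).prod (volume : Measure (Fin n → ℝ))) := by
    have := (hmp.integrable_comp_emb (MeasurableEquiv.measurableEmbedding _)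
      (g := Set.indicator (volSimplex (n + 1) s t) F)).mpr
      (hIntOn.integrable_indicator hmeas)
    simpa only [Function.comp_def, hsymm, Measure.volume_eq_prod] using this
  rw [MeasureTheory.Measure.volume_eq_prod, MeasureTheory.integral_prod _ hInt2]
  have key : ∀ x : ℝ,
      (∫ r' : Fin n → ℝ, Set.indicator (volSimplex (n + 1) s t) F (Fin.cons x r'))
        = Set.indicator (Set.Icc s t)
            (fun x => ∫ r' in volSimplex n x t, F (Fin.cons x r')) x := by
    intro x
    by_cases hx : x ∈ Set.Icc s t
    · rw [Set.indicator_of_mem hx,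
        ← MeasureTheory.integral_indicator (volSimplex_isClosed n x t).measurableSet]
      congr 1
      funext r'
      by_cases hr : r' ∈ volSimplex n x t
      · rw [Set.indicator_of_mem hr,
          Set.indicator_of_mem (cons_mem_volSimplex_iff.mpr ⟨hx, hr⟩)]
      · rw [Set.indicator_of_notMem hr,
          Set.indicator_of_notMem (fun hc => hr (cons_mem_volSimplex_iff.mp hc).2)]
    · rw [Set.indicator_of_notMem hx]
      have hz : ∀ r' : Fin n → ℝ,
          Set.indicator (volSimplex (n + 1) s t) F (Fin.cons x r') = 0 := fun r' =>
        Set.indicator_of_notMem (fun hc => hx (cons_mem_volSimplex_iff.mp hc).1) _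
      simp [hz]
  simp only [key]
  rw [MeasureTheory.integral_indicator measurableSet_Icc,
    MeasureTheory.integral_Icc_eq_integral_Ioc, ← intervalIntegral.integral_of_le hst]

lemma snoc_mem_pi_iff {m : ℕ} {a c : Fin (m + 1) → ℝ} {x : ℝ} {r' : Fin m → ℝ} :
    Fin.snoc r' x ∈ Set.univ.pi (fun l => Set.Icc (a l) (c l)) ↔
      x ∈ Set.Icc (a (Fin.last m)) (c (Fin.last m)) ∧
        r' ∈ Set.univ.pi (fun l : Fin m => Set.Icc (a l.castSucc) (c l.castSucc)) := by
  simp only [Set.mem_univ_pi]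
  constructor
  · intro h
    refine ⟨by simpa using h (Fin.last m), fun l => by simpa using h l.castSucc⟩
  · rintro ⟨hx, hr⟩ l
    induction l using Fin.lastCases with
    | last => simpa using hx
    | cast l => simpa using hr l

lemma box_split {m : ℕ} (a c : Fin (m + 1) → ℝ) (h : a (Fin.last m) ≤ c (Fin.last m))
    {F : (Fin (m + 1) → ℝ) → ℝ} (hF : Continuous F) :
    ∫ r in Set.univ.pi (fun l => Set.Icc (a l) (c l)), F r
      = ∫ x in a (Fin.last m)..c (Fin.last m),
          ∫ r' in Set.univ.pi (fun l : Fin m => Set.Icc (a l.castSucc) (c l.castSucc)),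
            F (Fin.snoc r' x) := by
  have hmeas : MeasurableSet (Set.univ.pi fun l => Set.Icc (a l) (c l)) :=
    MeasurableSet.univ_pi fun l => measurableSet_Icc
  have hmeas' : MeasurableSet
      (Set.univ.pi fun l : Fin m => Set.Icc (a l.castSucc) (c l.castSucc)) :=
    MeasurableSet.univ_pi fun l => measurableSet_Icc
  have hcpt : IsCompact (Set.univ.pi fun l => Set.Icc (a l) (c l)) :=
    isCompact_univ_pi fun l => isCompact_Icc
  have hIntOn : IntegrableOn F (Set.univ.pi fun l => Set.Icc (a l) (c l)) :=
    hF.continuousOn.integrableOn_compact hcpt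
  rw [← MeasureTheory.integral_indicator hmeas]
  have hmp := (MeasureTheory.volume_preserving_piFinSuccAbove
    (fun _ : Fin (m + 1) => ℝ) (Fin.last m)).symm
  rw [← hmp.integral_comp (MeasurableEquiv.measurableEmbedding _) _]
  have hsymm : ∀ p : ℝ × (Fin m → ℝ),
      (MeasurableEquiv.piFinSuccAbove (fun _ : Fin (m + 1) => ℝ) (Fin.last m)).symm p
        = Fin.snoc p.2 p.1 := by
    intro p
    simp [MeasurableEquiv.piFinSuccAbove_symm_apply, Fin.insertNthEquiv,
      Fin.insertNth_last']
  simp only [hsymm]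
  set S := Set.univ.pi fun l => Set.Icc (a l) (c l) with hS
  have hInt2 : Integrable
      (fun p : ℝ × (Fin m → ℝ) => Set.indicator S F (Fin.snoc p.2 p.1))
      ((volume : Measure ℝ).prod (volume : Measure (Fin m → ℝ))) := by
    have := (hmp.integrable_comp_emb (MeasurableEquiv.measurableEmbedding _)
      (g := Set.indicator S F)).mpr (hIntOn.integrable_indicator hmeas)
    simpa only [Function.comp_def, hsymm, Measure.volume_eq_prod] using this
  rw [MeasureTheory.Measure.volume_eq_prod, MeasureTheory.integral_prod _ hInt2]
  have key : ∀ x : ℝ,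
      (∫ r' : Fin m → ℝ, Set.indicator S F (Fin.snoc r' x))
        = Set.indicator (Set.Icc (a (Fin.last m)) (c (Fin.last m)))
            (fun x => ∫ r' in Set.univ.pi
              (fun l : Fin m => Set.Icc (a l.castSucc) (c l.castSucc)),
                F (Fin.snoc r' x)) x := by
    intro x
    by_cases hx : x ∈ Set.Icc (a (Fin.last m)) (c (Fin.last m))
    · rw [Set.indicator_of_mem hx, ← MeasureTheory.integral_indicator hmeas']
      congr 1
      funext r'
      by_cases hr : r' ∈ Set.univ.pi
          (fun l : Fin m => Set.Icc (a l.castSucc) (c l.castSucc))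
      · rw [Set.indicator_of_mem hr, Set.indicator_of_mem (snoc_mem_pi_iff.mpr ⟨hx, hr⟩)]
      · rw [Set.indicator_of_notMem hr,
          Set.indicator_of_notMem (fun hc => hr (snoc_mem_pi_iff.mp hc).2)]
    · rw [Set.indicator_of_notMem hx]
      have hz : ∀ r' : Fin m → ℝ, Set.indicator S F (Fin.snoc r' x) = 0 := fun r' =>
        Set.indicator_of_notMem (fun hc => hx (snoc_mem_pi_iff.mp hc).1) _
      simp [hz]
  simp only [key]
  rw [MeasureTheory.integral_indicator measurableSet_Icc,
    MeasureTheory.integral_Icc_eq_integral_Ioc, ← intervalIntegral.integral_of_le h]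

lemma continuous_chain {n : ℕ} (s τ : ℝ) (j : Fin (n + 2)) :
    Continuous fun r : Fin n → ℝ => chain s τ r j := by
  rcases em ((j : ℕ) = 0) with h0 | h0
  · simp only [chain, dif_pos h0]; exact continuous_const
  · rcases em ((j : ℕ) ≤ n) with h1 | h1
    · simp only [chain, dif_neg h0, dif_pos h1]; exact continuous_apply _
    · simp only [chain, dif_neg h0, dif_neg h1]; exact continuous_const

lemma continuous_nxt {n : ℕ} (τ : ℝ) (l : Fin n) :
    Continuous fun r : Fin n → ℝ => nxt r τ l := by
  rcases em ((l : ℕ) + 1 < n) with h | h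
  · simp only [nxt, dif_pos h]; exact continuous_apply _
  · simp only [nxt, dif_neg h]; exact continuous_const

lemma cons_eval {n : ℕ} (x : ℝ) (r' : Fin n → ℝ) (j : Fin (n + 1)) :
    (Fin.cons x r' : Fin (n + 1) → ℝ) j
      = if h : (j : ℕ) = 0 then x else r' ⟨(j : ℕ) - 1, by omega⟩ := by
  induction j using Fin.cases with
  | zero => simp
  | succ i =>
    rw [Fin.cons_succ, dif_neg (by simp)]
    exact congrArg r' (Fin.ext (by simp only [Fin.val_succ, Fin.coe_castSucc] <;> omega))

lemma chain_cons {n : ℕ} (s τ x : ℝ) (r' : Fin n → ℝ) (i : Fin (n + 2)) :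
    chain s τ (Fin.cons x r' : Fin (n + 1) → ℝ) i.succ = chain x τ r' i := by
  unfold chain
  rw [dif_neg (by simp : ¬((i.succ : Fin (n + 3)) : ℕ) = 0)]
  by_cases h0 : (i : ℕ) = 0
  · rw [dif_pos (by simp only [Fin.val_succ]; omega), dif_pos h0, cons_eval,
      dif_pos (by simp [Fin.val_succ, h0])]
  · by_cases h2 : (i : ℕ) ≤ n
    · rw [dif_pos (by simp only [Fin.val_succ]; omega), dif_neg h0, dif_pos h2, cons_eval,
        dif_neg (by simp only [Fin.val_succ]; omega)]
      exact congrArg r' (Fin.ext (by simp only [Fin.val_succ, Fin.coe_castSucc] <;> omega))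
    · rw [dif_neg (by simp only [Fin.val_succ]; omega), dif_neg h0, dif_neg h2]

lemma cons_nxt {n : ℕ} (τ x : ℝ) (r' : Fin n → ℝ) (l : Fin (n + 1)) :
    nxt (Fin.cons x r' : Fin (n + 1) → ℝ) τ l = chain x τ r' l.succ := by
  unfold nxt chain
  rw [dif_neg (by simp : ¬((l.succ : Fin (n + 2)) : ℕ) = 0)]
  by_cases h : (l : ℕ) + 1 < n + 1
  · rw [dif_pos h, dif_pos (by simp only [Fin.val_succ]; omega), cons_eval,
      dif_neg (by simp)]
    exact congrArg r' (Fin.ext (by simp only [Fin.val_succ, Fin.coe_castSucc] <;> omega))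
  · rw [dif_neg h, dif_neg (by simp only [Fin.val_succ]; omega)]

lemma cons_castSucc {n : ℕ} (τ x : ℝ) (r' : Fin n → ℝ) (l : Fin (n + 1)) :
    (Fin.cons x r' : Fin (n + 1) → ℝ) l = chain x τ r' l.castSucc := by
  unfold chain
  rw [cons_eval]
  by_cases h0 : (l : ℕ) = 0
  · rw [dif_pos h0, dif_pos (by simpa using h0)]
  · rw [dif_neg h0, dif_neg (by simpa using h0), dif_pos (by simpa [Fin.coe_castSucc] using Nat.lt_succ_iff.mp l.isLt)]
    exact congrArg r' (Fin.ext (by simp only [Fin.val_succ, Fin.coe_castSucc] <;> omega))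

lemma volSimplex_zero (s t : ℝ) : volSimplex 0 s t = Set.univ := by
  ext r
  simp [volSimplex]

lemma kapDot_zero (k : ℝ → ℝ → ℝ) (s t τ : ℝ) : kapDot k 0 s t τ = k τ s := by
  unfold kapDot
  rw [volSimplex_zero, Measure.restrict_univ, integral_pi0, Fin.prod_univ_one]
  have h1 : chain s τ (default : Fin 0 → ℝ) ((0 : Fin 1).succ) = τ := by
    unfold chain
    rw [dif_neg (by simp), dif_neg (by simp)]
  have h2 : chain s τ (default : Fin 0 → ℝ) (Fin.castSucc 0) = s := by
    unfold chain
    rw [dif_pos (by simp)]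
  rw [h1, h2]

lemma kapDot_succ (k : ℝ → ℝ → ℝ) (hk : Continuous fun p : ℝ × ℝ => k p.1 p.2)
    {s t : ℝ} (hst : s ≤ t) (τ : ℝ) (n : ℕ) :
    kapDot k (n + 1) s t τ = ∫ x in s..t, k x s * kapDot k n x t τ := by
  unfold kapDot
  rw [simplex_split hst (F := fun r => ∏ l : Fin (n + 2),
      k (chain s τ r l.succ) (chain s τ r l.castSucc))
    (continuous_finset_prod _ fun l _ =>
      hk.comp ((continuous_chain s τ l.succ).prodMk (continuous_chain s τ l.castSucc)))]
  congr 1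
  funext x
  have key : ∀ r' : Fin n → ℝ,
      (∏ l : Fin (n + 2), k (chain s τ (Fin.cons x r') l.succ)
        (chain s τ (Fin.cons x r') l.castSucc))
        = k x s * ∏ l : Fin (n + 1), k (chain x τ r' l.succ) (chain x τ r' l.castSucc) := by
    intro r'
    rw [Fin.prod_univ_succ]
    have h1 : chain s τ (Fin.cons x r' : Fin (n + 1) → ℝ) ((0 : Fin (n + 2)).succ) = x := by
      rw [chain_cons]
      unfold chain
      rw [dif_pos (by simp)]
    have h2 : chain s τ (Fin.cons x r' : Fin (n + 1) → ℝ) (Fin.castSucc 0) = s := by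
      unfold chain
      rw [dif_pos (by simp)]
    rw [h1, h2]
    congr 1
    refine Finset.prod_congr rfl fun l _ => ?_
    rw [← Fin.succ_castSucc, chain_cons, chain_cons]
  simp_rw [key]
  rw [MeasureTheory.integral_const_mul]

lemma kap_succ (k : ℝ → ℝ → ℝ) (hk : Continuous fun p : ℝ × ℝ => k p.1 p.2)
    {s t : ℝ} (hst : s ≤ t) (τ : ℝ) (n : ℕ) :
    kap k (n + 1) s t τ = ∫ x in s..t, kapDot k n x t τ := by
  unfold kap kapDot
  rw [simplex_split hst (F := fun r => ∏ l : Fin (n + 1), k (nxt r τ l) (r l))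
    (continuous_finset_prod _ fun l _ =>
      hk.comp ((continuous_nxt τ l).prodMk (continuous_apply l)))]
  congr 1
  funext x
  congr 1
  funext r'
  refine Finset.prod_congr rfl fun l _ => ?_
  rw [cons_nxt, cons_castSucc τ]

lemma entry_cont {X : Type*} [TopologicalSpace X] {M : X → Matrix (Fin R) (Fin R) ℝ}
    (h : Continuous M) (i j : Fin R) : Continuous fun x => M x i j :=
  (continuous_apply j).comp ((continuous_apply i).comp h)

lemma continuous_oneB_comp {X : Type*} [TopologicalSpace X]
    {M : X → Matrix (Fin R) (Fin R) ℝ} (hM : ∀ i j, Continuous fun x => M x i j) :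
    Continuous fun x => oneB b (M x) := by
  simp only [oneB_eq]
  exact continuous_finset_sum _ fun i _ =>
    continuous_finset_sum _ fun j _ => (hM i j).mul continuous_const

lemma of_intervalIntegral_mul_right (B : Matrix (Fin R) (Fin R) ℝ) {p q : ℝ}
    {M : ℝ → Matrix (Fin R) (Fin R) ℝ} (hM : ∀ i j, Continuous fun x => M x i j) :
    (Matrix.of fun i j => ∫ x in p..q, (M x * B) i j)
      = (Matrix.of fun i j => ∫ x in p..q, M x i j) * B := by
  have h := of_intervalIntegral_mul (1 : Matrix (Fin R) (Fin R) ℝ) B (p := p) (q := q) hM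
  simpa only [Matrix.one_mul] using h

lemma continuous_kk : Continuous fun p : ℝ × ℝ => oneB b (Eexp Λ (p.1 - p.2)) :=
  continuous_oneB_comp b fun i j =>
    (continuous_Eexp_entry Λ i j).comp (continuous_fst.sub continuous_snd)

lemma partA1 (n : ℕ) : ∀ {s t τ : ℝ}, s ≤ t → t ≤ τ →
    kapDot (fun a c => oneB b (Eexp Λ (a - c))) n s t τ
      = oneB b (phiN Λ b n (t - s) * Eexp Λ (τ - t)) := by
  induction n with
  | zero =>
    intro s t τ hst htτ
    rw [kapDot_zero]
    rw [show phiN Λ b 0 (t - s) = Eexp Λ (t - s) from rfl, Eexp_add,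
      show (t - s) + (τ - t) = τ - s by ring]
  | succ n ih =>
    intro s t τ hst htτ
    rw [kapDot_succ _ (continuous_kk Λ b) hst]
    rw [intervalIntegral.integral_congr (g := fun x =>
      oneB b (Eexp Λ (x - s) * Cmat b * phiN Λ b n (t - x) * Eexp Λ (τ - t)))
      (fun x hx => by
        rw [Set.uIcc_of_le hst] at hx
        show oneB b (Eexp Λ (x - s)) * kapDot _ n x t τ = _
        rw [ih hx.2 htτ, oneB_mul, ← Matrix.mul_assoc])]
    have hMc : Continuous fun x : ℝ =>
        Eexp Λ (x - s) * Cmat b * phiN Λ b n (t - x) * Eexp Λ (τ - t) :=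
      ((((continuous_Eexp Λ).comp (continuous_id.sub (continuous_const (y := s)))).matrix_mul
        continuous_const).matrix_mul
          ((continuous_phiN Λ b n).comp (continuous_const.sub continuous_id))).matrix_mul
        continuous_const
    rw [intervalIntegral_oneB b (fun i j => entry_cont hMc i j)]
    have hMc2 : Continuous fun x : ℝ => Eexp Λ (x - s) * Cmat b * phiN Λ b n (t - x) :=
      (((continuous_Eexp Λ).comp (continuous_id.sub continuous_const)).matrix_mul
        continuous_const).matrix_mul
          ((continuous_phiN Λ b n).comp (continuous_const.sub continuous_id))
    rw [of_intervalIntegral_mul_right (Eexp Λ (τ - t))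
      (M := fun x => Eexp Λ (x - s) * Cmat b * phiN Λ b n (t - x))
      (fun i j => entry_cont hMc2 i j)]
    rw [phiN_rec]

lemma partA2 (n : ℕ) {s t τ : ℝ} (hst : s ≤ t) (htτ : t ≤ τ) :
    kap (fun a c => oneB b (Eexp Λ (a - c))) (n + 1) s t τ
      = oneB b (psiN Λ b n (t - s) * Eexp Λ (τ - t)) := by
  rw [kap_succ _ (continuous_kk Λ b) hst]
  rw [intervalIntegral.integral_congr (g := fun x =>
    oneB b (phiN Λ b n (t - x) * Eexp Λ (τ - t)))
    (fun x hx => by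
      rw [Set.uIcc_of_le hst] at hx
      exact partA1 Λ b n hx.2 htτ)]
  have hMc : Continuous fun x : ℝ => phiN Λ b n (t - x) * Eexp Λ (τ - t) :=
    ((continuous_phiN Λ b n).comp (continuous_const.sub continuous_id)).matrix_mul
      continuous_const
  rw [intervalIntegral_oneB b (fun i j => entry_cont hMc i j)]
  rw [of_intervalIntegral_mul_right (Eexp Λ (τ - t))
    (M := fun x => phiN Λ b n (t - x))
    (fun i j => entry_cont ((continuous_phiN Λ b n).comp
      (continuous_const.sub continuous_id)) i j)]
  rw [psiN_rec]

lemma snoc_eval {m : ℕ} (x : ℝ) (r' : Fin m → ℝ) (j : Fin (m + 1)) :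
    (Fin.snoc r' x : Fin (m + 1) → ℝ) j
      = if h : (j : ℕ) < m then r' ⟨(j : ℕ), h⟩ else x := by
  induction j using Fin.lastCases with
  | last => rw [Fin.snoc_last, dif_neg (by simp)]
  | cast l =>
    rw [Fin.snoc_castSucc, dif_pos (by simpa using l.isLt)]
    exact congrArg r' (Fin.ext (by simp))

lemma nxt_last {m : ℕ} (R : Fin (m + 1) → ℝ) (τ : ℝ) : nxt R τ (Fin.last m) = τ := by
  unfold nxt
  rw [dif_neg (by simp)]

lemma snoc_nxt {m : ℕ} (τ x : ℝ) (r' : Fin m → ℝ) (l : Fin m) :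
    nxt (Fin.snoc r' x : Fin (m + 1) → ℝ) τ l.castSucc = nxt r' x l := by
  unfold nxt
  rw [dif_pos (by simp only [Fin.coe_castSucc]; omega :
    ((l.castSucc : Fin (m + 1)) : ℕ) + 1 < m + 1)]
  rw [snoc_eval]
  by_cases h : (l : ℕ) + 1 < m
  · rw [dif_pos (by simpa using h), dif_pos h]
    exact congrArg r' (Fin.ext (by simp))
  · rw [dif_neg (by simpa using h), dif_neg h]

lemma partB : ∀ (m : ℕ) (a c : Fin (m + 1) → ℝ) (nn : Fin (m + 1) → ℕ) (τ : ℝ),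
    (∀ l, a l ≤ c l) → (∀ l : Fin m, c l.castSucc ≤ a l.succ) → c (Fin.last m) ≤ τ →
    (∫ r in Set.univ.pi (fun l => Set.Icc (a l) (c l)),
        ∏ l, kapDot (fun p q => oneB b (Eexp Λ (p - q))) (nn l) (r l) (c l) (nxt r τ l))
      = oneB b (psiN Λ b (nn 0) (c 0 - a 0)
          * (List.ofFn fun l' : Fin m => Eexp Λ (a l'.succ - c l'.castSucc)
              * phiN Λ b (nn l'.succ + 1) (c l'.succ - a l'.succ)).prod
          * Eexp Λ (τ - c (Fin.last m))) := by
  intro m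
  induction m with
  | zero =>
    intro a c nn τ hac hca hcτ
    have hlast : (Fin.last 0) = (0 : Fin 1) := rfl
    rw [hlast] at hcτ
    have hbox_meas : MeasurableSet (Set.univ.pi fun l : Fin 1 => Set.Icc (a l) (c l)) :=
      MeasurableSet.univ_pi fun l => measurableSet_Icc
    have hcongr : Set.EqOn
        (fun r : Fin 1 → ℝ => ∏ l, kapDot (fun p q => oneB b (Eexp Λ (p - q)))
          (nn l) (r l) (c l) (nxt r τ l))
        (fun r : Fin 1 → ℝ =>
          oneB b (phiN Λ b (nn 0) (c 0 - r 0) * Eexp Λ (τ - c 0)))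
        (Set.univ.pi fun l : Fin 1 => Set.Icc (a l) (c l)) := by
      intro r hr
      simp only [Fin.prod_univ_succ, Fin.prod_univ_zero, mul_one]
      have h1 : nxt r τ (0 : Fin 1) = τ := nxt_last r τ
      rw [h1]
      exact partA1 Λ b (nn 0) ((Set.mem_univ_pi.mp hr) 0).2 hcτ
    rw [MeasureTheory.setIntegral_congr_fun hbox_meas hcongr]
    have hGcont : Continuous fun r : Fin 1 → ℝ =>
        oneB b (phiN Λ b (nn 0) (c 0 - r 0) * Eexp Λ (τ - c 0)) :=
      continuous_oneB_comp b fun i j => entry_cont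
        (((continuous_phiN Λ b (nn 0)).comp
          (continuous_const.sub (continuous_apply 0))).matrix_mul continuous_const) i j
    rw [box_split a c (hac _) hGcont]
    have hpi0 : (Set.univ.pi fun l : Fin 0 =>
        Set.Icc (a l.castSucc) (c l.castSucc)) = Set.univ := by
      ext r
      simp
    rw [intervalIntegral.integral_congr (g := fun x =>
      oneB b (phiN Λ b (nn 0) (c 0 - x) * Eexp Λ (τ - c 0))) (fun x _ => by
        rw [hpi0, Measure.restrict_univ, integral_pi0]
        have hsx : (Fin.snoc (default : Fin 0 → ℝ) x : Fin 1 → ℝ) 0 = x := by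
          rw [snoc_eval, dif_neg (by simp)]
        rw [hsx])]
    have hMc : Continuous fun x : ℝ => phiN Λ b (nn 0) (c 0 - x) * Eexp Λ (τ - c 0) :=
      ((continuous_phiN Λ b (nn 0)).comp
        (continuous_const.sub continuous_id)).matrix_mul continuous_const
    have hMc2 : Continuous fun x : ℝ => phiN Λ b (nn 0) (c 0 - x) :=
      (continuous_phiN Λ b (nn 0)).comp (continuous_const.sub continuous_id)
    rw [intervalIntegral_oneB b (fun i j => entry_cont hMc i j)]
    rw [of_intervalIntegral_mul_right (Eexp Λ (τ - c 0))
      (M := fun x => phiN Λ b (nn 0) (c 0 - x)) (fun i j => entry_cont hMc2 i j)]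
    rw [hlast, psiN_rec]
    simp only [List.ofFn_zero, List.prod_nil, Matrix.mul_one]
  | succ m ih =>
    intro a c nn τ hac hca hcτ
    have hbox_meas : MeasurableSet (Set.univ.pi fun l : Fin (m + 2) => Set.Icc (a l) (c l)) :=
      MeasurableSet.univ_pi fun l => measurableSet_Icc
    have hbox'_meas : MeasurableSet (Set.univ.pi fun l : Fin (m + 1) =>
        Set.Icc (a l.castSucc) (c l.castSucc)) :=
      MeasurableSet.univ_pi fun l => measurableSet_Icc
    have hcongr : Set.EqOn
        (fun r : Fin (m + 2) → ℝ => ∏ l, kapDot (fun p q => oneB b (Eexp Λ (p - q)))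
          (nn l) (r l) (c l) (nxt r τ l))
        (fun r : Fin (m + 2) → ℝ => ∏ l : Fin (m + 2),
          oneB b (phiN Λ b (nn l) (c l - r l) * Eexp Λ (nxt r τ l - c l)))
        (Set.univ.pi fun l => Set.Icc (a l) (c l)) := by
      intro r hr
      simp only
      refine Finset.prod_congr rfl fun l _ => ?_
      refine partA1 Λ b (nn l) ((Set.mem_univ_pi.mp hr) l).2 ?_
      unfold nxt
      by_cases h : (l : ℕ) + 1 < m + 2
      · rw [dif_pos h]
        have h1 := hca ⟨(l : ℕ), by omega⟩
        have e1 : ((⟨(l : ℕ), by omega⟩ : Fin (m + 1)).castSucc) = l := Fin.ext (by simp)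
        have e2 : ((⟨(l : ℕ), by omega⟩ : Fin (m + 1)).succ) = ⟨(l : ℕ) + 1, h⟩ :=
          Fin.ext (by simp)
        rw [e1, e2] at h1
        exact le_trans h1 ((Set.mem_univ_pi.mp hr) ⟨(l : ℕ) + 1, h⟩).1
      · rw [dif_neg h]
        have hl : l = Fin.last (m + 1) := Fin.ext (by simp only [Fin.val_last]; omega)
        rw [hl]
        exact hcτ
    rw [MeasureTheory.setIntegral_congr_fun hbox_meas hcongr]
    have hGcont : Continuous fun r : Fin (m + 2) → ℝ => ∏ l : Fin (m + 2),
        oneB b (phiN Λ b (nn l) (c l - r l) * Eexp Λ (nxt r τ l - c l)) :=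
      continuous_finset_prod _ fun l _ => continuous_oneB_comp b fun i j => entry_cont
        (Continuous.matrix_mul
          ((continuous_phiN Λ b (nn l)).comp (continuous_const.sub (continuous_apply l)))
          ((continuous_Eexp Λ).comp ((continuous_nxt τ l).sub (continuous_const (y := c l))))) i j
    rw [box_split a c (hac _) hGcont]
    have hbig : Set.EqOn
        (fun x : ℝ => ∫ r' in Set.univ.pi (fun l : Fin (m + 1) =>
            Set.Icc (a l.castSucc) (c l.castSucc)),
          (fun r : Fin (m + 2) → ℝ => ∏ l : Fin (m + 2),
            oneB b (phiN Λ b (nn l) (c l - r l) * Eexp Λ (nxt r τ l - c l)))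
              (Fin.snoc r' x))
        (fun x : ℝ =>
          oneB b ((psiN Λ b (nn 0) (c 0 - a 0)
              * (List.ofFn fun l' : Fin m =>
                  Eexp Λ (a l'.succ.castSucc - c l'.castSucc.castSucc)
                    * phiN Λ b (nn l'.succ.castSucc + 1)
                        (c l'.succ.castSucc - a l'.succ.castSucc)).prod
              * Eexp Λ (a (Fin.last (m + 1)) - c (Fin.last m).castSucc))
            * (Eexp Λ (x - a (Fin.last (m + 1))) * Cmat b
                * phiN Λ b (nn (Fin.last (m + 1))) (c (Fin.last (m + 1)) - x))
            * Eexp Λ (τ - c (Fin.last (m + 1)))))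
        (Set.uIcc (a (Fin.last (m + 1))) (c (Fin.last (m + 1)))) := by
      intro x hx
      rw [Set.uIcc_of_le (hac _)] at hx
      simp only
      have hsnoc : ∀ r' : Fin (m + 1) → ℝ,
          (∏ l : Fin (m + 2),
            oneB b (phiN Λ b (nn l) (c l - (Fin.snoc r' x : Fin (m + 2) → ℝ) l)
              * Eexp Λ (nxt (Fin.snoc r' x : Fin (m + 2) → ℝ) τ l - c l)))
          = (∏ l : Fin (m + 1),
              oneB b (phiN Λ b (nn l.castSucc) (c l.castSucc - r' l)
                * Eexp Λ (nxt r' x l - c l.castSucc)))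
            * oneB b (phiN Λ b (nn (Fin.last (m + 1))) (c (Fin.last (m + 1)) - x)
                * Eexp Λ (τ - c (Fin.last (m + 1)))) := by
        intro r'
        rw [Fin.prod_univ_castSucc]
        congr 1
        · exact Finset.prod_congr rfl fun l _ => by rw [Fin.snoc_castSucc, snoc_nxt]
        · rw [Fin.snoc_last, nxt_last]
      simp only [hsnoc]
      rw [MeasureTheory.integral_mul_const]
      have hback : Set.EqOn
          (fun r' : Fin (m + 1) → ℝ => ∏ l : Fin (m + 1),
            oneB b (phiN Λ b (nn l.castSucc) (c l.castSucc - r' l)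
              * Eexp Λ (nxt r' x l - c l.castSucc)))
          (fun r' : Fin (m + 1) → ℝ => ∏ l : Fin (m + 1),
            kapDot (fun p q => oneB b (Eexp Λ (p - q))) (nn l.castSucc) (r' l)
              (c l.castSucc) (nxt r' x l))
          (Set.univ.pi fun l : Fin (m + 1) => Set.Icc (a l.castSucc) (c l.castSucc)) := by
        intro r' hr'
        simp only
        refine Finset.prod_congr rfl fun l _ => ?_
        refine (partA1 Λ b _ ((Set.mem_univ_pi.mp hr') l).2 ?_).symm
        unfold nxt
        by_cases h : (l : ℕ) + 1 < m + 1
        · rw [dif_pos h]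
          have h1 := hca ⟨(l : ℕ), by omega⟩
          have e1 : ((⟨(l : ℕ), by omega⟩ : Fin (m + 1)).castSucc) = l.castSucc :=
            Fin.ext (by simp)
          have e2 : ((⟨(l : ℕ), by omega⟩ : Fin (m + 1)).succ)
              = (⟨(l : ℕ) + 1, h⟩ : Fin (m + 1)).castSucc := Fin.ext (by simp)
          rw [e1, e2] at h1
          exact le_trans h1 ((Set.mem_univ_pi.mp hr') ⟨(l : ℕ) + 1, h⟩).1
        · rw [dif_neg h]
          have hl : l = Fin.last m := Fin.ext (by simp only [Fin.val_last]; omega)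
          have h1 := hca ⟨m, by omega⟩
          have e1 : ((⟨m, by omega⟩ : Fin (m + 1)).castSucc) = (Fin.last m).castSucc :=
            Fin.ext (by simp)
          have e2 : ((⟨m, by omega⟩ : Fin (m + 1)).succ) = Fin.last (m + 1) :=
            Fin.ext (by simp)
          rw [e1, e2] at h1
          rw [hl]
          exact le_trans h1 hx.1
      rw [MeasureTheory.setIntegral_congr_fun hbox'_meas hback]
      have hca' : ∀ l' : Fin m,
          (fun l : Fin (m + 1) => c l.castSucc) l'.castSucc
            ≤ (fun l : Fin (m + 1) => a l.castSucc) l'.succ := by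
        intro l'
        simp only
        have h1 := hca l'.castSucc
        rwa [Fin.succ_castSucc] at h1
      have hcx : (fun l : Fin (m + 1) => c l.castSucc) (Fin.last m) ≤ x := by
        simp only
        have h1 := hca (Fin.last m)
        rw [Fin.succ_last] at h1
        exact le_trans h1 hx.1
      rw [ih (fun l => a l.castSucc) (fun l => c l.castSucc) (fun l => nn l.castSucc) x
        (fun l => hac _) hca' hcx]
      rw [oneB_mul]
      congr 1
      rw [show Eexp Λ (x - c (Fin.last m).castSucc)
          = Eexp Λ (a (Fin.last (m + 1)) - c (Fin.last m).castSucc)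
            * Eexp Λ (x - a (Fin.last (m + 1))) from by
        rw [Eexp_add]
        congr 1
        ring]
      simp only [Fin.castSucc_zero, Matrix.mul_assoc]
    rw [intervalIntegral.integral_congr hbig]
    have hA : Continuous fun x : ℝ => Eexp Λ (x - a (Fin.last (m + 1))) * Cmat b
        * phiN Λ b (nn (Fin.last (m + 1))) (c (Fin.last (m + 1)) - x) :=
      (((continuous_Eexp Λ).comp (continuous_id.sub continuous_const)).matrix_mul
        continuous_const).matrix_mul
        ((continuous_phiN Λ b _).comp (continuous_const.sub continuous_id))
    have hMfull : Continuous fun x : ℝ =>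
        (psiN Λ b (nn 0) (c 0 - a 0)
            * (List.ofFn fun l' : Fin m =>
                Eexp Λ (a l'.succ.castSucc - c l'.castSucc.castSucc)
                  * phiN Λ b (nn l'.succ.castSucc + 1)
                      (c l'.succ.castSucc - a l'.succ.castSucc)).prod
            * Eexp Λ (a (Fin.last (m + 1)) - c (Fin.last m).castSucc))
          * (Eexp Λ (x - a (Fin.last (m + 1))) * Cmat b
              * phiN Λ b (nn (Fin.last (m + 1))) (c (Fin.last (m + 1)) - x))
          * Eexp Λ (τ - c (Fin.last (m + 1))) :=
      (continuous_const.matrix_mul hA).matrix_mul continuous_const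
    rw [intervalIntegral_oneB b (fun i j => entry_cont hMfull i j)]
    rw [of_intervalIntegral_mul
      (psiN Λ b (nn 0) (c 0 - a 0)
        * (List.ofFn fun l' : Fin m =>
            Eexp Λ (a l'.succ.castSucc - c l'.castSucc.castSucc)
              * phiN Λ b (nn l'.succ.castSucc + 1)
                  (c l'.succ.castSucc - a l'.succ.castSucc)).prod
        * Eexp Λ (a (Fin.last (m + 1)) - c (Fin.last m).castSucc))
      (Eexp Λ (τ - c (Fin.last (m + 1))))
      (fun i j => entry_cont hA i j)]
    rw [phiN_rec]
    congr 1
    conv_rhs => rw [List.ofFn_succ']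
    rw [List.prod_concat]
    have hlist : (List.ofFn fun l' : Fin m =>
        Eexp Λ (a l'.castSucc.succ - c l'.castSucc.castSucc)
          * phiN Λ b (nn l'.castSucc.succ + 1) (c l'.castSucc.succ - a l'.castSucc.succ))
        = (List.ofFn fun l' : Fin m =>
            Eexp Λ (a l'.succ.castSucc - c l'.castSucc.castSucc)
              * phiN Λ b (nn l'.succ.castSucc + 1)
                  (c l'.succ.castSucc - a l'.succ.castSucc)) := by
      refine congrArg List.ofFn (funext fun l' => ?_)
      rw [Fin.succ_castSucc]
    rw [hlist, Fin.succ_last]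
    simp only [Matrix.mul_assoc]


/-- Scalar finite state space kernel `k(t,s) = 𝟙ᵀ exp(-(t-s)Λ) b`:
(a) `κ̇^{n+1} = 𝟙ᵀ φ_n(t-s) E(τ-t) b` and `κ^{n+1} = 𝟙ᵀ ψ_{n+1}(t-s) E(τ-t) b`;
(b) the block weights `μ` (superscripts `nn l + 1`) factor into an ordered matrix
product. -/
theorem stmt15 {T : ℝ} (hT : 0 < T) {R : ℕ} (hR : 1 ≤ R)
    (Λ : Matrix (Fin R) (Fin R) ℝ) (b : Fin R → ℝ) :
    (∀ (n : ℕ) (s t τ : ℝ), 0 ≤ s → s ≤ t → t ≤ τ → τ ≤ T →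
      kapDot (fun a c => (fun _ : Fin R => (1 : ℝ)) ⬝ᵥ (Eexp Λ (a - c)).mulVec b) n s t τ
          = (fun _ : Fin R => (1 : ℝ)) ⬝ᵥ
              ((phiN Λ b n (t - s) * Eexp Λ (τ - t)).mulVec b) ∧
      kap (fun a c => (fun _ : Fin R => (1 : ℝ)) ⬝ᵥ (Eexp Λ (a - c)).mulVec b)
            (n + 1) s t τ
          = (fun _ : Fin R => (1 : ℝ)) ⬝ᵥ
              ((psiN Λ b n (t - s) * Eexp Λ (τ - t)).mulVec b)) ∧
    (∀ (J : ℕ) (t : ℕ → ℝ), 0 ≤ t 0 → t J ≤ T →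
      (∀ a c : ℕ, a < c → c ≤ J → t a < t c) →
      ∀ (K : ℕ) (i : Fin (K + 2) → ℕ), StrictMono i → 0 < i 0 →
        i (Fin.last (K + 1)) ≤ J →
      ∀ nn : Fin (K + 1) → ℕ,
      muW (fun a c => (fun _ : Fin R => (1 : ℝ)) ⬝ᵥ (Eexp Λ (a - c)).mulVec b) t
          (fun l => i l.castSucc) nn (t (i (Fin.last (K + 1))))
        = (fun _ : Fin R => (1 : ℝ)) ⬝ᵥ
            ((psiN Λ b (nn 0) (t (i 0) - t (i 0 - 1))
              * (List.ofFn fun l' : Fin K =>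
                  Eexp Λ (t (i l'.succ.castSucc - 1) - t (i l'.castSucc.castSucc))
                    * phiN Λ b (nn l'.succ + 1)
                        (t (i l'.succ.castSucc) - t (i l'.succ.castSucc - 1))).prod
              * Eexp Λ (t (i (Fin.last (K + 1))) - t (i (Fin.last K).castSucc))).mulVec
              b)) := by
  constructor
  · intro n s t τ _ hst htτ _
    exact ⟨partA1 Λ b n hst htτ, partA2 Λ b n hst htτ⟩
  · intro J t _ _ ht K i hi hi0 hiJ nn
    have hmono : ∀ p q : ℕ, p ≤ q → q ≤ J → t p ≤ t q := by
      intro p q hpq hq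
      rcases eq_or_lt_of_le hpq with rfl | h
      · exact le_rfl
      · exact (ht p q h hq).le
    have hiJ' : ∀ l : Fin (K + 2), i l ≤ J := fun l =>
      le_trans (hi.monotone (Fin.le_last l)) hiJ
    have hmain := partB Λ b K (fun l => t (i l.castSucc - 1)) (fun l => t (i l.castSucc))
      nn (t (i (Fin.last (K + 1))))
      (fun l => hmono _ _ (Nat.sub_le _ _) (hiJ' _))
      (fun l' => by
        have hlt : i l'.castSucc.castSucc < i l'.succ.castSucc := hi (by
          simp [Fin.lt_def])
        exact hmono _ _ (by omega) (le_trans (Nat.sub_le _ _) (hiJ' _)))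
      (hmono _ _ (le_of_lt (hi (by simp [Fin.lt_def]))) (hiJ' _))
    simp only [Fin.castSucc_zero] at hmain
    exact hmain
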